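/- For integers T and Q with Q ≠ 0 and t = (T^2-2Q)/Q, the Lucas sequence satisfies L_{2m} = T Q^{m-1} U_m(t) and L_{2m+1} = Q^m (U_{m+1}(t) + U_m(t)) for all natural numbers m ≥ 1 (and m ≥ 0 for the odd case), where U_n are the Chebyshev polynomials of the second kind with U_0 = 0, U_1 = 1. -/
import Mathlib


/-- Chebyshev polynomial of the second kind (rescaled): U 0 = 0, U 1 = 1. -/
def chebU (x : ℚ) : ℕ → ℚ
  | 0 => 0
  | 1 => 1
  | n + 2 => x * chebU x (n + 1) - chebU x n

theorem lucas_eq_chebU (T Q : ℤ) (hQ : Q ≠ 0)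
    (L : ℕ → ℚ) (hL0 : L 0 = 0) (hL1 : L 1 = 1)
    (hLrec : ∀ n, L (n + 2) = (T : ℚ) * L (n + 1) - (Q : ℚ) * L n)
    (t : ℚ) (ht : t = ((T : ℚ) ^ 2 - 2 * Q) / Q) :
    (∀ m : ℕ, 1 ≤ m → L (2 * m) = (T : ℚ) * (Q : ℚ) ^ (m - 1) * chebU t m) ∧
    (∀ m : ℕ, L (2 * m + 1) = (Q : ℚ) ^ m * (chebU t (m + 1) + chebU t m)) := by
  have hQ' : (Q : ℚ) ≠ 0 := Int.cast_ne_zero.mpr hQ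
  have htQ : t * Q = (T : ℚ) ^ 2 - 2 * Q := by
    rw [ht]; field_simp
  have key : ∀ m : ℕ, L (2 * m + 1) = (Q : ℚ) ^ m * (chebU t (m + 1) + chebU t m) ∧
      L (2 * m + 2) = (T : ℚ) * (Q : ℚ) ^ m * chebU t (m + 1) := by
    intro m
    induction m with
    | zero =>
      refine ⟨by simp [hL1, chebU], ?_⟩
      have h2 := hLrec 0
      simp [hL0, hL1, chebU] at h2 ⊢
      linarith [h2]
    | succ k ih =>
      obtain ⟨h1, h2⟩ := ih
      have e3 : (2 : ℕ) * (k + 1) + 1 = 2 * k + 1 + 2 := by ring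
      have e4 : (2 : ℕ) * (k + 1) + 2 = 2 * k + 2 + 2 := by ring
      have r1 := hLrec (2 * k + 1)
      have r2 := hLrec (2 * k + 2)
      have c1 : chebU t (k + 2) = t * chebU t (k + 1) - chebU t k := rfl
      have c2 : chebU t (k + 3) = t * chebU t (k + 2) - chebU t (k + 1) := rfl
      have odd : L (2 * (k + 1) + 1) =
          (Q : ℚ) ^ (k + 1) * (chebU t (k + 2) + chebU t (k + 1)) := by
        rw [e3, r1, h1, h2, c1]
        linear_combination (-((Q:ℚ) ^ k * chebU t (k + 1))) * htQ
      refine ⟨odd, ?_⟩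
      rw [e4, r2]
      rw [show (2:ℕ) * k + 2 + 1 = 2 * (k + 1) + 1 by ring, odd, h2,
        show chebU t (k + 1 + 1) = chebU t (k + 2) from rfl]
      ring
  constructor
  · intro m hm
    obtain ⟨k, rfl⟩ := Nat.exists_eq_add_of_le hm
    have := (key k).2
    rw [show (2:ℕ) * (1 + k) = 2 * k + 2 by ring, this,
      show 1 + k - 1 = k from by omega, show 1 + k = k + 1 from by omega]
  · intro m; exact (key m).1
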